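/- Let G be a graph and ℓ : V(G) → ℤ a function with ∑_{v ∈ V(G)} ℓ(v) = 0 and ℓ(v) ≡ d_G(v) (mod 2) for all v. Then G has an orientation D with d⁺_D(v) − d⁻_D(v) = ℓ(v) for all v if and only if |∑_{v ∈ S} ℓ(v)| ≤ |∂_G(S)| for every subset S of V(G), where ∂_G(S) is the set of edges with exactly one endpoint in S. -/

import Mathlib

/-- A finite loopless multigraph: each edge has an ordered pair of distinct endpoints
(the ordering is immaterial; it is only used to describe orientations). -/
structure Multigraph : Type 1 where
  V : Type
  fintypeV : Fintype V
  decEqV : DecidableEq V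
  E : Type
  fintypeE : Fintype E
  decEqE : DecidableEq E
  ends : E → V × V
  loopless : ∀ e, (ends e).1 ≠ (ends e).2

attribute [instance] Multigraph.fintypeV Multigraph.decEqV Multigraph.fintypeE Multigraph.decEqE

namespace Multigraph

variable (G : Multigraph)

/-- Tail of an edge under an orientation `D` (`true` = directed from first to second end). -/
def tail (D : G.E → Bool) (e : G.E) : G.V := if D e then (G.ends e).1 else (G.ends e).2

/-- Head of an edge under an orientation `D`. -/
def head (D : G.E → Bool) (e : G.E) : G.V := if D e then (G.ends e).2 else (G.ends e).1

/-- Out-degree of `v` under orientation `D`. -/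
def outDeg (D : G.E → Bool) (v : G.V) : ℕ := (Finset.univ.filter fun e => G.tail D e = v).card

/-- In-degree of `v` under orientation `D`. -/
def inDeg (D : G.E → Bool) (v : G.V) : ℕ := (Finset.univ.filter fun e => G.head D e = v).card

/-- A modulo 3-orientation. -/
def HasMod3Orientation : Prop :=
  ∃ D : G.E → Bool, ∀ v : G.V, ((G.outDeg D v : ZMod 3) = (G.inDeg D v : ZMod 3))

/-- A nowhere-zero 3-flow. -/
def HasNowhereZero3Flow : Prop :=
  ∃ (D : G.E → Bool) (f : G.E → ℤ),
    (∀ e, 1 ≤ |f e| ∧ |f e| ≤ 2) ∧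
    (∀ v : G.V,
      (∑ e : G.E, if G.tail D e = v then f e else 0) =
      (∑ e : G.E, if G.head D e = v then f e else 0))

/-- `ℤ₃`-connectivity. -/
def Z3Connected : Prop :=
  ∀ b : G.V → ZMod 3, (∑ v : G.V, b v) = 0 →
    ∃ D : G.E → Bool, ∀ v : G.V, (G.outDeg D v : ZMod 3) - (G.inDeg D v : ZMod 3) = b v

/-- Degree of a vertex. -/
def degree (v : G.V) : ℕ :=
  (Finset.univ.filter fun e => (G.ends e).1 = v ∨ (G.ends e).2 = v).card

/-- Minimum degree `δ(G)`. -/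
noncomputable def minDegree : ℕ := sInf (Set.range G.degree)

/-- The edge cut `∂_G(S)`. -/
def cut (S : Finset G.V) : Finset G.E :=
  Finset.univ.filter fun e =>
    ((G.ends e).1 ∈ S ∧ (G.ends e).2 ∉ S) ∨ ((G.ends e).2 ∈ S ∧ (G.ends e).1 ∉ S)

def Adjacent (u v : G.V) : Prop :=
  ∃ e : G.E, G.ends e = (u, v) ∨ G.ends e = (v, u)

def IsIndepSet (S : Finset G.V) : Prop :=
  ∀ u ∈ S, ∀ v ∈ S, u ≠ v → ¬ G.Adjacent u v

/-- The independence number `α(G)`. -/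
noncomputable def indepNum : ℕ := sSup {n : ℕ | ∃ S : Finset G.V, G.IsIndepSet S ∧ S.card = n}

def FiveEdgeConnected : Prop :=
  ∀ S : Finset G.V, S.Nonempty → S ≠ Finset.univ → 5 ≤ (G.cut S).card

/-- Every odd edge cut has at least 5 edges. -/
def Odd5EdgeConnected : Prop :=
  ∀ S : Finset G.V, Odd (G.cut S).card → 5 ≤ (G.cut S).card

/-- `G` contains `K₄` as a subgraph. -/
def ContainsK4 : Prop :=
  ∃ a b c d : G.V, a ≠ b ∧ a ≠ c ∧ a ≠ d ∧ b ≠ c ∧ b ≠ d ∧ c ≠ d ∧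
    G.Adjacent a b ∧ G.Adjacent a c ∧ G.Adjacent a d ∧
    G.Adjacent b c ∧ G.Adjacent b d ∧ G.Adjacent c d

/-- The neighbourhood `N(X)`: vertices outside `X` with a neighbour in `X`. -/
noncomputable def neighborFinset (X : Finset G.V) : Finset G.V := by
  classical
  exact Finset.univ.filter fun y => y ∉ X ∧ ∃ x ∈ X, G.Adjacent x y

/-- Induced subgraph on a vertex set `S`. -/
def induce (S : Finset G.V) : Multigraph where
  V := {v // v ∈ S}
  fintypeV := inferInstance
  decEqV := inferInstance
  E := {e : G.E // (G.ends e).1 ∈ S ∧ (G.ends e).2 ∈ S}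
  fintypeE := inferInstance
  decEqE := inferInstance
  ends := fun e => (⟨(G.ends e.1).1, e.2.1⟩, ⟨(G.ends e.1).2, e.2.2⟩)
  loopless := fun e h => G.loopless e.1 (congrArg Subtype.val h)

/-- The relation identifying the two ends of each edge in `F`. -/
def contractRel (F : Set G.E) (x y : G.V) : Prop :=
  ∃ e ∈ F, G.ends e = (x, y) ∨ G.ends e = (y, x)

/-- Contraction of a set `F` of edges: identify endpoints of edges of `F`
(via the equivalence closure), delete the edges of `F` and all resulting loops. -/
noncomputable def contractEdges (F : Set G.E) : Multigraph := by
  classical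
  exact
    { V := Quot (G.contractRel F)
      fintypeV := Fintype.ofSurjective (Quot.mk _) (fun q => Quot.inductionOn q fun a => ⟨a, rfl⟩)
      decEqV := Classical.decEq _
      E := {e : G.E // e ∉ F ∧
            Quot.mk (G.contractRel F) (G.ends e).1 ≠ Quot.mk (G.contractRel F) (G.ends e).2}
      fintypeE := Subtype.fintype _
      decEqE := Classical.decEq _
      ends := fun e => (Quot.mk _ (G.ends e.1).1, Quot.mk _ (G.ends e.1).2)
      loopless := fun e => e.2.2 }

end Multigraph

/-- A subgraph of a multigraph. -/
structure Multigraph.Subgraph (G : Multigraph) where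
  verts : Finset G.V
  edges : Finset G.E
  ends_mem : ∀ e ∈ edges, (G.ends e).1 ∈ verts ∧ (G.ends e).2 ∈ verts

namespace Multigraph

/-- A subgraph as a multigraph in its own right. -/
def Subgraph.toMultigraph {G : Multigraph} (H : G.Subgraph) : Multigraph where
  V := {v // v ∈ H.verts}
  fintypeV := inferInstance
  decEqV := inferInstance
  E := {e // e ∈ H.edges}
  fintypeE := inferInstance
  decEqE := inferInstance
  ends := fun e => (⟨(G.ends e.1).1, (H.ends_mem e.1 e.2).1⟩, ⟨(G.ends e.1).2, (H.ends_mem e.1 e.2).2⟩)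
  loopless := fun e h => G.loopless e.1 (congrArg Subtype.val h)

/-- `G` is `⟨ℤ₃⟩`-reduced: it has no `ℤ₃`-connected subgraph with at least two vertices. -/
def Z3Reduced (G : Multigraph) : Prop :=
  ∀ H : G.Subgraph, H.toMultigraph.Z3Connected → H.verts.card ≤ 1

/-- The contraction `G/H` of a subgraph. -/
noncomputable def contractSubgraph (G : Multigraph) (H : G.Subgraph) : Multigraph :=
  G.contractEdges {e | e ∈ H.edges}

/-- The `⟨ℤ₃⟩`-reduction of `G`: contract (the edges of) all maximal `ℤ₃`-connected
subgraphs of `G`. -/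
noncomputable def reduction (G : Multigraph) : Multigraph :=
  G.contractEdges {e | ∃ H : G.Subgraph, H.toMultigraph.Z3Connected ∧ e ∈ H.edges}

end Multigraph

/-- `r(n)`: the maximum number of edges of a `⟨ℤ₃⟩`-reduced graph on `n` vertices. -/
noncomputable def edgeMaxReduced (n : ℕ) : ℕ :=
  sSup {m : ℕ | ∃ G : Multigraph, G.Z3Reduced ∧ Fintype.card G.V = n ∧ Fintype.card G.E = m}

/-- The complete graph `K_n`. -/
def completeK (n : ℕ) : Multigraph where
  V := Fin n
  fintypeV := inferInstance
  decEqV := inferInstance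
  E := {p : Fin n × Fin n // p.1 < p.2}
  fintypeE := inferInstance
  decEqE := inferInstance
  ends := fun p => p.1
  loopless := fun p => Fin.ne_of_lt p.2

private theorem fin_succ_ne {n : ℕ} (hn : 2 ≤ n) (i : Fin n)
    (hv : (i : ℕ) = ((i : ℕ) + 1) % n) : False := by
  have hi := i.isLt
  by_cases hlt : (i : ℕ) + 1 < n
  · rw [Nat.mod_eq_of_lt hlt] at hv; omega
  · have he : (i : ℕ) + 1 = n := by omega
    rw [he, Nat.mod_self] at hv; omega

/-- The cycle `C_n` (for `n ≥ 2`); `C_2` is a digon. -/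
def cycleGraph (n : ℕ) (hn : 2 ≤ n) : Multigraph where
  V := Fin n
  fintypeV := inferInstance
  decEqV := inferInstance
  E := Fin n
  fintypeE := inferInstance
  decEqE := inferInstance
  ends := fun i => (i, ⟨((i : ℕ) + 1) % n, Nat.mod_lt _ (by omega)⟩)
  loopless := fun i h => fin_succ_ne hn i (congrArg Fin.val h)

/-- The wheel `W_n` (for `n ≥ 2`): an `n`-cycle on `some 0, …, some (n-1)` together
with a center `none` joined to every vertex of the cycle. -/
def wheelGraph (n : ℕ) (hn : 2 ≤ n) : Multigraph where
  V := Option (Fin n)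
  fintypeV := inferInstance
  decEqV := inferInstance
  E := Fin n ⊕ Fin n
  fintypeE := inferInstance
  decEqE := inferInstance
  ends := fun e => match e with
    | .inl i => (some i, some ⟨((i : ℕ) + 1) % n, Nat.mod_lt _ (by omega)⟩)
    | .inr i => (none, some i)
  loopless := by
    rintro (i | i) h
    · exact fin_succ_ne hn i (congrArg Fin.val (Option.some_injective _ h))
    · cases (h : (none : Option (Fin n)) = some i)

/-!
Necessity: the net out-degree summed over `S` counts each edge of `∂(S)` with sign `±1` and every
other edge with `0`. Sufficiency, by induction on the number of edges, in the one-sided form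
`ℓ(S) ≤ |∂(S)|`: call `S` tight if equality holds. An edge `uv` may be oriented from `u` to `v`
(and `ℓ` replaced by `ℓ - 1ᵤ + 1ᵥ`) unless some tight set contains `v` but not `u`; by parity the
cut condition then survives the deletion of `uv`. If both directions were blocked, by a tight set
`S` containing `v` but not `u` and a tight set `T` containing `u` but not `v`, submodularity of the
cut function, strict by `2` because `uv` crosses from `S \ T` to `T \ S`, would give
`ℓ(S ∩ T) + ℓ(S ∪ T) > |∂(S ∩ T)| + |∂(S ∪ T)|`.
-/

open Finset

lemma eq_zero_of_sum_eq_zero_of_forall_sum_le_zero {α : Type*} [Fintype α] [DecidableEq α]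
    {f : α → ℤ} (hsum : ∑ a, f a = 0) (hle : ∀ s : Finset α, ∑ a ∈ s, f a ≤ 0) (a : α) :
    f a = 0 := by
  have hsingle := hle {a}
  have hrest := hle (univ.erase a)
  rw [sum_singleton] at hsingle
  rw [← add_sum_erase univ f (mem_univ a)] at hsum
  omega

namespace Multigraph

variable (G : Multigraph)

def orientedIncidence (D : G.E → Bool) (e : G.E) (v : G.V) : ℤ :=
  (if G.tail D e = v then 1 else 0) - (if G.head D e = v then 1 else 0)

def netOutDeg (F : Finset G.E) (D : G.E → Bool) (v : G.V) : ℤ :=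
  ∑ e ∈ F, G.orientedIncidence D e v

def cutOf (F : Finset G.E) (S : Finset G.V) : Finset G.E :=
  F.filter fun e => Xor ((G.ends e).1 ∈ S) ((G.ends e).2 ∈ S)

variable {G}

lemma cut_eq_cutOf_univ (S : Finset G.V) : G.cut S = G.cutOf univ S := rfl

lemma cutOf_empty (S : Finset G.V) : G.cutOf ∅ S = ∅ := filter_empty _

lemma card_cutOf_insert {F : Finset G.E} {e : G.E} (he : e ∉ F) (S : Finset G.V) :
    #(G.cutOf (insert e F) S) =
      #(G.cutOf F S) + if Xor ((G.ends e).1 ∈ S) ((G.ends e).2 ∈ S) then 1 else 0 := by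
  rw [cutOf, filter_insert]
  split_ifs
  · rw [card_insert_of_notMem (fun h => he (mem_filter.mp h).1), cutOf]
  · rfl

lemma xor_tail_head_iff (D : G.E → Bool) (e : G.E) (S : Finset G.V) :
    Xor (G.tail D e ∈ S) (G.head D e ∈ S) ↔ Xor ((G.ends e).1 ∈ S) ((G.ends e).2 ∈ S) := by
  unfold tail head
  split_ifs
  · rfl
  · rw [xor_comm]

lemma orientedIncidence_congr {D D' : G.E → Bool} {e : G.E} (h : D e = D' e) (v : G.V) :
    G.orientedIncidence D e v = G.orientedIncidence D' e v := by
  unfold orientedIncidence tail head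
  rw [h]

lemma netOutDeg_congr {F : Finset G.E} {D D' : G.E → Bool} (h : ∀ e ∈ F, D e = D' e)
    (v : G.V) : G.netOutDeg F D v = G.netOutDeg F D' v :=
  sum_congr rfl fun e he => orientedIncidence_congr (h e he) v

lemma netOutDeg_univ (D : G.E → Bool) (v : G.V) :
    G.netOutDeg univ D v = G.outDeg D v - G.inDeg D v := by
  simp only [netOutDeg, orientedIncidence, sum_sub_distrib, sum_boole, outDeg, inDeg]

lemma sum_orientedIncidence (D : G.E → Bool) (e : G.E) (S : Finset G.V) :
    ∑ v ∈ S, G.orientedIncidence D e v =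
      (if G.tail D e ∈ S then 1 else 0) - (if G.head D e ∈ S then 1 else 0) := by
  simp only [orientedIncidence, sum_sub_distrib, sum_ite_eq]

lemma abs_sum_netOutDeg_le (F : Finset G.E) (D : G.E → Bool) (S : Finset G.V) :
    |∑ v ∈ S, G.netOutDeg F D v| ≤ #(G.cutOf F S) := by
  have hedge : ∀ e, |∑ v ∈ S, G.orientedIncidence D e v| =
      if Xor ((G.ends e).1 ∈ S) ((G.ends e).2 ∈ S) then 1 else 0 := by
    intro e
    simp only [sum_orientedIncidence, ← xor_tail_head_iff D e S]
    by_cases ht : G.tail D e ∈ S <;> by_cases hh : G.head D e ∈ S <;> simp [ht, hh, Xor]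
  calc |∑ v ∈ S, G.netOutDeg F D v|
      = |∑ e ∈ F, ∑ v ∈ S, G.orientedIncidence D e v| := by simp only [netOutDeg]; rw [sum_comm]
    _ ≤ ∑ e ∈ F, |∑ v ∈ S, G.orientedIncidence D e v| := abs_sum_le_sum_abs _ _
    _ = #(G.cutOf F S) := by simp only [hedge, sum_boole, cutOf]

lemma degree_eq_sum (v : G.V) :
    G.degree v =
      ∑ e, ((if (G.ends e).1 = v then 1 else 0) + (if (G.ends e).2 = v then 1 else 0)) := by
  rw [degree, card_filter]
  refine sum_congr rfl fun e _ => ?_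
  have := G.loopless e
  by_cases h1 : (G.ends e).1 = v <;> by_cases h2 : (G.ends e).2 = v <;> simp_all

lemma sum_degree (S : Finset G.V) :
    ∑ v ∈ S, G.degree v =
      2 * #(univ.filter fun e => (G.ends e).1 ∈ S ∧ (G.ends e).2 ∈ S) + #(G.cut S) := by
  simp only [degree_eq_sum, cut_eq_cutOf_univ, cutOf, card_filter, mul_sum]
  rw [sum_comm, ← sum_add_distrib]
  refine sum_congr rfl fun e _ => ?_
  rw [sum_add_distrib, sum_ite_eq, sum_ite_eq]
  by_cases h1 : (G.ends e).1 ∈ S <;> by_cases h2 : (G.ends e).2 ∈ S <;> simp [h1, h2, Xor]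

lemma sum_modEq_card_cut {l : G.V → ℤ} (hpar : ∀ v, l v ≡ (G.degree v : ℤ) [ZMOD 2])
    (S : Finset G.V) : ∑ v ∈ S, l v ≡ #(G.cut S) [ZMOD 2] := by
  refine (Int.ModEq.sum fun v _ => hpar v).trans ?_
  rw [← Nat.cast_sum, sum_degree]
  push_cast
  unfold Int.ModEq
  omega

lemma card_cutOf_inter_add_card_cutOf_union_add_two_le {F : Finset G.E} {e : G.E} (he : e ∈ F)
    {S T : Finset G.V} (h1S : (G.ends e).1 ∈ S) (h1T : (G.ends e).1 ∉ T)
    (h2T : (G.ends e).2 ∈ T) (h2S : (G.ends e).2 ∉ S) :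
    #(G.cutOf F (S ∩ T)) + #(G.cutOf F (S ∪ T)) + 2 ≤ #(G.cutOf F S) + #(G.cutOf F T) := by
  let χ : Finset G.V → G.E → ℕ := fun X f =>
    if Xor ((G.ends f).1 ∈ X) ((G.ends f).2 ∈ X) then 1 else 0
  have hedge : ∀ f ∈ F,
      χ (S ∩ T) f + χ (S ∪ T) f + (if f = e then 2 else 0) ≤ χ S f + χ T f := by
    intro f _
    by_cases hf : f = e
    · subst hf
      simp [χ, Xor, h1S, h1T, h2T, h2S]
    · by_cases a : (G.ends f).1 ∈ S <;> by_cases b : (G.ends f).2 ∈ S <;>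
        by_cases c : (G.ends f).1 ∈ T <;> by_cases d : (G.ends f).2 ∈ T <;>
        simp [χ, Xor, hf, a, b, c, d]
  have := sum_le_sum hedge
  rw [sum_add_distrib, sum_add_distrib, sum_add_distrib, sum_ite_eq', if_pos he] at this
  simpa only [cutOf, card_filter] using this

variable {F : Finset G.E} {ℓ : G.V → ℤ}

lemma sum_lt_card_cutOf_of_crossing_tight {e : G.E} (he : e ∈ F)
    (hle : ∀ X, ∑ v ∈ X, ℓ v ≤ #(G.cutOf F X)) {S T : Finset G.V}
    (h1S : (G.ends e).1 ∈ S) (h1T : (G.ends e).1 ∉ T) (h2T : (G.ends e).2 ∈ T)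
    (h2S : (G.ends e).2 ∉ S) (hS : ∑ v ∈ S, ℓ v = #(G.cutOf F S)) :
    ∑ v ∈ T, ℓ v < #(G.cutOf F T) := by
  have hsub := card_cutOf_inter_add_card_cutOf_union_add_two_le he h1S h1T h2T h2S
  have hinter := hle (S ∩ T)
  have hunion := hle (S ∪ T)
  have hsplit : ∑ v ∈ S ∪ T, ℓ v + ∑ v ∈ S ∩ T, ℓ v = ∑ v ∈ S, ℓ v + ∑ v ∈ T, ℓ v :=
    sum_union_inter
  linarith

lemma exists_orientation_forall_lt_of_head_mem {e : G.E} (he : e ∈ F)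
    (hle : ∀ X, ∑ v ∈ X, ℓ v ≤ #(G.cutOf F X)) :
    ∃ D : G.E → Bool, ∀ S, G.head D e ∈ S → G.tail D e ∉ S → ∑ v ∈ S, ℓ v < #(G.cutOf F S) := by
  by_cases htight : ∃ T, (G.ends e).2 ∈ T ∧ (G.ends e).1 ∉ T ∧ ∑ v ∈ T, ℓ v = #(G.cutOf F T)
  · obtain ⟨T, h2T, h1T, hT⟩ := htight
    exact ⟨fun _ => false, fun S h1S h2S => lt_of_le_of_ne (hle S) fun hS =>
      (sum_lt_card_cutOf_of_crossing_tight he hle h1S h1T h2T h2S hS).ne hT⟩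
  · simp only [not_exists, not_and] at htight
    exact ⟨fun _ => true, fun S h2S h1S => lt_of_le_of_ne (hle S) (htight S h2S h1S)⟩

lemma cut_condition_sub_orientedIncidence {e : G.E} (he : e ∉ F) (D : G.E → Bool)
    (hle : ∀ S, ∑ v ∈ S, ℓ v ≤ #(G.cutOf (insert e F) S))
    (hpar : ∀ S, ∑ v ∈ S, ℓ v ≡ #(G.cutOf (insert e F) S) [ZMOD 2])
    (hsafe : ∀ S, G.head D e ∈ S → G.tail D e ∉ S →
      ∑ v ∈ S, ℓ v < #(G.cutOf (insert e F) S)) (S : Finset G.V) :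
    ∑ v ∈ S, (ℓ v - G.orientedIncidence D e v) ≤ #(G.cutOf F S) ∧
      ∑ v ∈ S, (ℓ v - G.orientedIncidence D e v) ≡ #(G.cutOf F S) [ZMOD 2] := by
  have hle := hle S
  have hpar := hpar S
  have hsafe := hsafe S
  simp only [card_cutOf_insert he, ← xor_tail_head_iff D] at hle hpar hsafe
  rw [sum_sub_distrib, sum_orientedIncidence]
  unfold Int.ModEq at hpar ⊢
  by_cases ht : G.tail D e ∈ S <;> by_cases hh : G.head D e ∈ S <;>
    simp only [ht, hh, Xor, if_true, if_false, and_true, not_true, not_false_eq_true,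
      and_false, or_false, false_or, forall_const] at hle hpar hsafe ⊢ <;>
    push_cast at hle hpar hsafe ⊢ <;> omega

theorem exists_netOutDeg_eq (F : Finset G.E) (ℓ : G.V → ℤ) (hsum : ∑ v, ℓ v = 0)
    (hle : ∀ S, ∑ v ∈ S, ℓ v ≤ #(G.cutOf F S))
    (hpar : ∀ S, ∑ v ∈ S, ℓ v ≡ #(G.cutOf F S) [ZMOD 2]) :
    ∃ D : G.E → Bool, ∀ v, G.netOutDeg F D v = ℓ v := by
  induction F using Finset.induction_on generalizing ℓ with
  | empty =>
    refine ⟨fun _ => true, fun v => ?_⟩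
    have hzero := eq_zero_of_sum_eq_zero_of_forall_sum_le_zero hsum
      (fun S => by simpa [cutOf_empty] using hle S) v
    rw [hzero, netOutDeg, sum_empty]
  | insert e F he ih =>
    obtain ⟨D₀, hsafe⟩ := exists_orientation_forall_lt_of_head_mem (mem_insert_self e F) hle
    have hcut := cut_condition_sub_orientedIncidence he D₀ hle hpar hsafe
    have hsum' : ∑ v, (ℓ v - G.orientedIncidence D₀ e v) = 0 := by
      simp [sum_sub_distrib, sum_orientedIncidence, hsum]
    obtain ⟨D, hD⟩ := ih _ hsum' (fun S => (hcut S).1) (fun S => (hcut S).2)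
    refine ⟨Function.update D e (D₀ e), fun v => ?_⟩
    rw [netOutDeg, sum_insert he, ← netOutDeg,
      netOutDeg_congr (fun f hf => Function.update_of_ne (ne_of_mem_of_not_mem hf he) _ _) v,
      hD, orientedIncidence_congr (Function.update_self e (D₀ e) D) v]
    ring

end Multigraph

/-- Hakimi's orientation theorem. -/
theorem hakimi_orientation (G : Multigraph) (l : G.V → ℤ)
    (hsum : (∑ v, l v) = 0) (hpar : ∀ v, l v ≡ (G.degree v : ℤ) [ZMOD 2]) :
    (∃ D : G.E → Bool, ∀ v, (G.outDeg D v : ℤ) - (G.inDeg D v : ℤ) = l v) ↔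
      (∀ S : Finset G.V, |∑ v ∈ S, l v| ≤ ((G.cut S).card : ℤ)) := by
  constructor
  · rintro ⟨D, hD⟩ S
    simpa only [← hD, ← Multigraph.netOutDeg_univ, Multigraph.cut_eq_cutOf_univ] using
      G.abs_sum_netOutDeg_le Finset.univ D S
  · intro hcut
    obtain ⟨D, hD⟩ := G.exists_netOutDeg_eq Finset.univ l hsum
      (fun S => (le_abs_self _).trans (hcut S)) (Multigraph.sum_modEq_card_cut hpar)
    exact ⟨D, fun v => by rw [← Multigraph.netOutDeg_univ, hD]⟩
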